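/- Let N ≥ 2. Suppose that on a neighbourhood of γ = 0 we are given maps γ ↦ x(γ) ∈ ℝ^N and γ ↦ λ(γ) ∈ ℝ such that x(·) is differentiable at 0, Σ_{i=1}^N x_i(γ) = 0 for all γ, and ∇V_γ(x(γ)) = λ(γ)·(1,…,1) for all γ (i.e., x(γ) is a family of stationary points of V_γ restricted to S). Then γ ↦ V_γ(x(γ)) is differentiable at γ = 0 with derivative (1/4) Σ_{i=1}^N (x_{i+1}(0) − x_i(0))² (indices cyclic). In particular V_γ(x(γ)) = V_0(x(0)) + (γ/4) Σ_{i=1}^N (x_{i+1}(0) − x_i(0))² + o(γ). -/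

import Mathlib

/-!
Hellmann–Feynman (envelope) argument: by the chain rule the derivative of `γ ↦ V_γ(x(γ))` at `0`
is `∂_γ V_0(x(0)) + ⟨∇V_0(x(0)), x'(0)⟩`. Stationarity makes `∇V_0(x(0)) = λ(0)·(1,…,1)`, and the
constraint `Σᵢ xᵢ(γ) = 0` forces `Σᵢ x'ᵢ(0) = 0`, so only the explicit `γ`-derivative
`(1/4) Σᵢ (x_{i+1}(0) − xᵢ(0))²` survives.
-/

/-- The coupled potential `V_γ(x) = Σᵢ (xᵢ⁴/4 - xᵢ²/2) + (γ/4) Σᵢ (x_{i+1} - xᵢ)²`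
on the periodic lattice of `N` sites. -/
noncomputable def Vg (N : ℕ) [NeZero N] (γ : ℝ) (x : Fin N → ℝ) : ℝ :=
  (∑ i, ((x i) ^ 4 / 4 - (x i) ^ 2 / 2)) + γ / 4 * ∑ i, (x (i + 1) - x i) ^ 2

theorem sum_eq_zero_of_hasDerivAt_of_eventually_sum_eq {ι : Type*} [Fintype ι]
    {x : ℝ → ι → ℝ} {x' : ι → ℝ} {t c : ℝ} (hx : HasDerivAt x x' t)
    (hsum : ∀ᶠ γ in nhds t, ∑ i, x γ i = c) :
    ∑ i, x' i = 0 :=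
  (HasDerivAt.fun_sum fun i _ => hasDerivAt_pi.mp hx i).unique
    ((hasDerivAt_const t c).congr_of_eventuallyEq hsum)

theorem hasDerivAt_Vg_comp {N : ℕ} [NeZero N] {x : ℝ → Fin N → ℝ} {x' : Fin N → ℝ} {t : ℝ}
    (hx : HasDerivAt x x' t) :
    HasDerivAt (fun γ => Vg N γ (x γ))
      (∑ i, (x t i ^ 3 - x t i) * x' i + (1 / 4 * ∑ i, (x t (i + 1) - x t i) ^ 2 +
        t / 4 * ∑ i, 2 * (x t (i + 1) - x t i) * (x' (i + 1) - x' i))) t := by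
  have hxi : ∀ i, HasDerivAt (fun γ => x γ i) (x' i) t := hasDerivAt_pi.mp hx
  have honsite : HasDerivAt (fun γ => ∑ i, (x γ i ^ 4 / 4 - x γ i ^ 2 / 2))
      (∑ i, (x t i ^ 3 - x t i) * x' i) t :=
    HasDerivAt.fun_sum fun i _ =>
      ((((hxi i).fun_pow 4).div_const 4).sub (((hxi i).fun_pow 2).div_const 2)).congr_deriv
        (by ring)
  have hcoupling : HasDerivAt (fun γ => ∑ i, (x γ (i + 1) - x γ i) ^ 2)
      (∑ i, 2 * (x t (i + 1) - x t i) * (x' (i + 1) - x' i)) t :=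
    HasDerivAt.fun_sum fun i _ =>
      (((hxi (i + 1)).fun_sub (hxi i)).fun_pow 2).congr_deriv (by ring)
  have hcoeff : HasDerivAt (fun γ : ℝ => γ / 4) (1 / 4) t := (hasDerivAt_id t).div_const 4
  exact honsite.add (hcoeff.mul hcoupling)

theorem stmt_19 (N : ℕ) [NeZero N]
    (x : ℝ → Fin N → ℝ) (lam : ℝ → ℝ) (δ : ℝ) (hδ : 0 < δ)
    (hdiff : DifferentiableAt ℝ x 0)
    (hsum : ∀ γ : ℝ, |γ| < δ → ∑ i, x γ i = 0)
    (hstat : ∀ γ : ℝ, |γ| < δ → ∀ i : Fin N,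
      (x γ i) ^ 3 - x γ i - γ / 2 * (x γ (i + 1) - 2 * x γ i + x γ (i - 1)) = lam γ) :
    HasDerivAt (fun γ : ℝ => Vg N γ (x γ))
      (1 / 4 * ∑ i, (x 0 (i + 1) - x 0 i) ^ 2) 0 := by
  have hx := hdiff.hasDerivAt
  have hsum' : ∑ i, deriv x 0 i = 0 :=
    sum_eq_zero_of_hasDerivAt_of_eventually_sum_eq hx <| by
      filter_upwards [Metric.ball_mem_nhds (0 : ℝ) hδ] with γ hγ
      exact hsum γ (by simpa using hγ)
  have hgrad : ∀ i, x 0 i ^ 3 - x 0 i = lam 0 := fun i => by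
    simpa using hstat 0 (by simpa using hδ) i
  have hgrad_term : ∑ i, (x 0 i ^ 3 - x 0 i) * deriv x 0 i = 0 := by
    simp only [hgrad, ← Finset.mul_sum, hsum', mul_zero]
  simpa [hgrad_term] using hasDerivAt_Vg_comp hx
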